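/- Let p < 1/2 (so q > 1/2). Then there exists a sequence (A_n)_{n≥2} with 0 < A_n < 1 for all n and A_n → 0 as n → ∞, such that for every n ≥ 2 and every y ∈ [A_n, 1], 0 ≤ ∏_{i=1}^n f(G^{i−1}(y)) ≤ (1/(2q))^n, where G^{i−1} denotes the (i−1)-fold iterate of G. -/

import Mathlib

/-! On `[0, 1]` we have `G t ≥ t`, and below a level `c < 1` chosen so that `2q f(c) < 1` the map
`G` expands by a factor `L > 1`; so an orbit started at `y ≥ c L⁻ᵐ` reaches
`[c, 1]` within `m` steps and stays there. At most `m` factors of the product are then bounded by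
`f 0 = 2q` and the others by `f c`. With `m = n / (K + 1)` and `(2q)² (2q f(c))ᴷ ≤ 1`, the excess
`(2q)^(2m)` is absorbed by the `n - m ≥ K m` small factors. -/

open Set Filter Topology

noncomputable def G (q : ℝ) (t : ℝ) : ℝ := t * (t + 2*q*(1 - t))

noncomputable def f (p q : ℝ) (t : ℝ) : ℝ := 2*p*t + 2*q*(1 - t)

lemma G_mapsTo_Icc {q : ℝ} (hq0 : 0 ≤ q) (hq1 : q ≤ 1) : MapsTo (G q) (Icc 0 1) (Icc 0 1) := by
  rintro t ⟨ht0, ht1⟩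
  refine ⟨mul_nonneg ht0 (by nlinarith), ?_⟩
  have h : 1 - G q t = (1 - t) * (1 - (2*q - 1) * t) := by unfold G; ring
  linarith [mul_nonneg (sub_nonneg.2 ht1) (by nlinarith : 0 ≤ 1 - (2*q - 1) * t)]

lemma min_le_G {q c t : ℝ} (hq : 1/2 ≤ q) (ht : t ∈ Icc (0:ℝ) 1) :
    min c ((2*q - (2*q - 1)*c) * t) ≤ G q t := by
  obtain ⟨ht0, ht1⟩ := ht
  rcases le_total c t with hct | htc
  · refine (min_le_left _ _).trans (hct.trans ?_)
    simp only [G]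
    nlinarith [mul_nonneg (mul_nonneg ht0 (sub_nonneg.2 ht1)) (by linarith : (0:ℝ) ≤ 2*q - 1)]
  · refine (min_le_right _ _).trans ?_
    simp only [G]
    nlinarith [mul_nonneg (mul_nonneg ht0 (sub_nonneg.2 htc)) (by linarith : (0:ℝ) ≤ 2*q - 1)]

lemma min_le_iterate {g : ℝ → ℝ} {S : Set ℝ} (hS : MapsTo g S S) {c L : ℝ} (hc : 0 ≤ c)
    (hL : 1 ≤ L) (hg : ∀ t ∈ S, min c (L * t) ≤ g t) {y : ℝ} (hy : y ∈ S) (i : ℕ) :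
    min c (L ^ i * y) ≤ g^[i] y := by
  induction i with
  | zero => simp
  | succ i ih =>
    rw [Function.iterate_succ_apply']
    calc min c (L ^ (i + 1) * y) ≤ min c (L * min c (L ^ i * y)) := by
          rw [mul_min_of_nonneg _ _ (by linarith), pow_succ', mul_assoc]
          exact le_min (min_le_left _ _)
            (le_min ((min_le_left _ _).trans (le_mul_of_one_le_left hc hL)) (min_le_right _ _))
      _ ≤ min c (L * g^[i] y) := by gcongr
      _ ≤ g (g^[i] y) := hg _ (hS.iterate i hy)

lemma le_iterate_of_div_pow_le {g : ℝ → ℝ} {S : Set ℝ} (hS : MapsTo g S S) {c L : ℝ}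
    (hc : 0 ≤ c) (hL : 1 ≤ L) (hg : ∀ t ∈ S, min c (L * t) ≤ g t) {y : ℝ} (hy : y ∈ S)
    {M i : ℕ} (hyc : c / L ^ M ≤ y) (hi : M ≤ i) : c ≤ g^[i] y := by
  refine (le_min le_rfl ?_).trans (min_le_iterate hS hc hL hg hy i)
  have hL0 : 0 < L := by linarith
  calc c = L ^ M * (c / L ^ M) := by field_simp
    _ ≤ L ^ i * y := mul_le_mul (pow_le_pow_right₀ hL hi) hyc (by positivity) (by positivity)

lemma f_antitone {p q : ℝ} (hpq : p ≤ q) : Antitone (f p q) := by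
  intro s t hst
  simp only [f]
  nlinarith

lemma f_nonneg {p q t : ℝ} (hp : 0 ≤ p) (hq : 0 ≤ q) (ht : t ∈ Icc (0:ℝ) 1) : 0 ≤ f p q t := by
  obtain ⟨ht0, ht1⟩ := ht
  simp only [f]
  nlinarith

lemma exists_mul_f_lt_one {p q : ℝ} (hpq : p + q = 1) (hp : p < 1/2) :
    ∃ c ∈ Ioo (0:ℝ) 1, 2*q * f p q c < 1 := by
  -- at `t = 1` the product is `4pq = 1 - (q - p)^2`
  have h1 : 2*q * f p q 1 < 1 := by
    simp only [f]
    nlinarith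
  have hcont : ContinuousWithinAt (fun t => 2*q * f p q t) (Iio 1) 1 := by
    unfold f; fun_prop
  obtain ⟨c, hc, hc'⟩ :=
    ((hcont.eventually (gt_mem_nhds h1)).and (Ioo_mem_nhdsLT zero_lt_one)).exists
  exact ⟨c, hc', hc⟩

lemma prod_range_le_pow_mul_pow {x : ℕ → ℝ} {a b : ℝ} {M n : ℕ} (hMn : M ≤ n)
    (hx : ∀ i, 0 ≤ x i) (ha : ∀ i < M, x i ≤ a) (hb : ∀ i, M ≤ i → x i ≤ b) :
    ∏ i ∈ Finset.range n, x i ≤ a ^ M * b ^ (n - M) := by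
  rw [← Finset.prod_range_mul_prod_Ico _ hMn]
  have hprod (s : Finset ℕ) (c : ℝ) (h : ∀ i ∈ s, x i ≤ c) : ∏ i ∈ s, x i ≤ c ^ s.card := by
    simpa using Finset.prod_le_prod (fun i _ => hx i) h
  have hinit := hprod (Finset.range M) a fun i hi => ha i (Finset.mem_range.1 hi)
  have htail := hprod (Finset.Ico M n) b fun i hi => hb i (Finset.mem_Ico.1 hi).1
  simpa using mul_le_mul hinit htail (Finset.prod_nonneg fun i _ => hx i)
    ((Finset.prod_nonneg fun i _ => hx i).trans hinit)

lemma pow_mul_pow_sub_le_inv_pow {a b : ℝ} {K M n : ℕ} (ha : 0 < a) (hb : 0 ≤ b) (hab : a * b ≤ 1)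
    (hK : a ^ 2 * (a * b) ^ K ≤ 1) (hMn : M * (K + 1) ≤ n) :
    a ^ M * b ^ (n - M) ≤ (1 / a) ^ n := by
  rw [one_div_pow, le_div_iff₀ (by positivity)]
  obtain ⟨k, rfl⟩ := Nat.exists_eq_add_of_le (show M ≤ n by nlinarith)
  have hKM : K * M ≤ k := by nlinarith
  calc a ^ M * b ^ (M + k - M) * a ^ (M + k) = a ^ (2 * M) * (a * b) ^ k := by
        rw [Nat.add_sub_cancel_left]; ring
    _ ≤ a ^ (2 * M) * (a * b) ^ (K * M) :=
        mul_le_mul_of_nonneg_left (pow_le_pow_of_le_one (by positivity) hab hKM) (by positivity)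
    _ = (a ^ 2 * (a * b) ^ K) ^ M := by ring
    _ ≤ 1 := pow_le_one₀ (by positivity) hK

/-- for p < 1/2, there is a sequence (A_n)_{n≥2} with 0 < A_n < 1, A_n → 0,
such that for every n ≥ 2 and y ∈ [A_n, 1], 0 ≤ ∏_{i=1}^n f(G^{i−1}(y)) ≤ (1/(2q))^n. -/
theorem density_bound_near_one (p q : ℝ) (hp : 0 ≤ p) (hpq : p + q = 1) (hp' : p < 1/2) :
    ∃ A : ℕ → ℝ,
      (∀ n : ℕ, 2 ≤ n → 0 < A n ∧ A n < 1) ∧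
      Tendsto A atTop (𝓝 0) ∧
      (∀ n : ℕ, 2 ≤ n → ∀ y ∈ Set.Icc (A n) 1,
        0 ≤ ∏ i ∈ Finset.range n, f p q ((G q)^[i] y) ∧
        ∏ i ∈ Finset.range n, f p q ((G q)^[i] y) ≤ (1/(2*q))^n) := by
  have hq : 1/2 < q := by linarith
  have hq0 : 0 ≤ q := by linarith
  have hG := G_mapsTo_Icc hq0 (by linarith)
  have hf := f_antitone (p := p) (q := q) (by linarith)
  obtain ⟨c, ⟨hc0, hc1⟩, hfc⟩ := exists_mul_f_lt_one hpq hp'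
  set L := 2*q - (2*q - 1)*c
  have hL : 1 < L := by nlinarith
  obtain ⟨K, hK⟩ := exists_pow_lt_of_lt_one (by positivity : 0 < 1 / (2*q)^2) hfc
  rw [lt_div_iff₀ (by positivity)] at hK
  refine ⟨fun n => c / L ^ (n / (K + 1)), fun n _ => ⟨by positivity,
    (div_le_self hc0.le (one_le_pow₀ hL.le)).trans_lt hc1⟩, ?_, ?_⟩
  · exact (tendsto_const_nhds.div_atTop (tendsto_pow_atTop_atTop_of_one_lt hL)).comp
      (Nat.tendsto_div_const_atTop K.succ_ne_zero)
  rintro n - y ⟨hyA, hy1⟩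
  have hy : y ∈ Icc (0:ℝ) 1 := ⟨(by positivity : 0 ≤ c / L ^ (n / (K + 1))).trans hyA, hy1⟩
  have hmem (i : ℕ) : (G q)^[i] y ∈ Icc (0:ℝ) 1 := hG.iterate i hy
  have hesc (i : ℕ) (hi : n / (K + 1) ≤ i) : c ≤ (G q)^[i] y :=
    le_iterate_of_div_pow_le hG hc0.le hL.le (fun t ht => min_le_G hq.le ht) hy hyA hi
  refine ⟨Finset.prod_nonneg fun i _ => f_nonneg hp hq0 (hmem i), ?_⟩
  calc _ ≤ (2*q) ^ (n / (K + 1)) * f p q c ^ (n - n / (K + 1)) :=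
        prod_range_le_pow_mul_pow (Nat.div_le_self n _) (fun i => f_nonneg hp hq0 (hmem i))
          (fun i _ => (hf (hmem i).1).trans_eq (by simp [f])) (fun i hi => hf (hesc i hi))
    _ ≤ _ := pow_mul_pow_sub_le_inv_pow (by positivity) (f_nonneg hp hq0 ⟨hc0.le, hc1.le⟩)
        hfc.le (by linarith) (Nat.div_mul_le_self n (K + 1))
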